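/- Let n ≥ 2 and 1 ≤ q ≤ n−1 be integers and C > 0 a real number. Let λ_1, …, λ_{n−1} be real numbers (ordered λ_1 ≤ ⋯ ≤ λ_{n−1}) satisfying 2C > |λ_1| ≥ ⋯ ≥ |λ_{n−q}| > C, λ_{n−q} < 0, and |λ_i| < 1/C for all n−q+1 ≤ i ≤ n−1. Let 0 < ε < min{1, 1/(2(n−1)C²)}. Then for every j with 0 ≤ j ≤ n−q−1 and every subset I ⊆ {1,…,n−1} with |I| = j, Σ_{i∈I} λ_i + (ε−1) Σ_{k=1}^{n−1} λ_k ≥ C − (n−1)/C. -/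

import Mathlib

/-!
Write the left-hand side as `ε ∑ λ - ∑_{i ∉ I} λ_i` and split the indices into the block
`B = {1, …, n - q}` of large negative eigenvalues and the block `T` of small ones. Since `|I| < |B|`,
some `i ∈ B` lies outside `I` and contributes `-λ_i > C`, while the choice of `ε` makes
`ε ∑_B λ ≥ -1/C`. On `T` every coefficient has modulus at most one, so each index costs at most `1/C`.
-/

open Finset

/-- The eigenvalue `∑_{i ∈ I} λ_i + (ε - 1) ∑_k λ_k` of the modified commutator, restricted to the
indices in `s`. -/
def commutatorSum {ι : Type*} [DecidableEq ι] (ε : ℝ) (f : ι → ℝ) (s I : Finset ι) : ℝ :=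
  ∑ i ∈ s ∩ I, f i + (ε - 1) * ∑ i ∈ s, f i

section commutatorSum

variable {ι : Type*} [DecidableEq ι] {ε : ℝ} {f : ι → ℝ} {s t I : Finset ι}

theorem commutatorSum_union (h : Disjoint s t) :
    commutatorSum ε f (s ∪ t) I = commutatorSum ε f s I + commutatorSum ε f t I := by
  have hI : Disjoint (s ∩ I) (t ∩ I) := h.mono inter_subset_left inter_subset_left
  simp only [commutatorSum, union_inter_distrib_right, sum_union h, sum_union hI]
  ring

theorem commutatorSum_eq (ε : ℝ) (f : ι → ℝ) (s I : Finset ι) :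
    commutatorSum ε f s I = ε * ∑ i ∈ s ∩ I, f i + (ε - 1) * ∑ i ∈ s \ I, f i := by
  rw [commutatorSum, ← sum_inter_add_sum_sdiff s I f]
  ring

theorem sub_le_commutatorSum {C M : ℝ} (hε : 0 ≤ ε) (hC : 0 ≤ C) (hI : #I < #s)
    (hupper : ∀ i ∈ s, f i ≤ -C) (hlower : ∀ i ∈ s, -M ≤ f i) :
    C - ε * (#s * M) ≤ commutatorSum ε f s I := by
  obtain ⟨i, hi⟩ : (s \ I).Nonempty :=
    sdiff_nonempty.mpr fun hsI ↦ (card_le_card hsI).not_gt hI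
  have hout : C ≤ -∑ i ∈ s \ I, f i := by
    rw [← sum_neg_distrib]
    refine le_trans ?_ (single_le_sum (fun k hk ↦ ?_) hi)
    · linarith [hupper i (sdiff_subset hi)]
    · linarith [hupper k (sdiff_subset hk)]
  have hall : -(#s * M) ≤ ∑ i ∈ s, f i := by
    simpa using card_nsmul_le_sum s f (-M) hlower
  have hsplit : commutatorSum ε f s I = ε * ∑ i ∈ s, f i - ∑ i ∈ s \ I, f i := by
    rw [commutatorSum_eq, ← sum_inter_add_sum_sdiff s I f]
    ring
  rw [hsplit]
  nlinarith

theorem neg_card_mul_le_commutatorSum {δ : ℝ} (hε0 : 0 ≤ ε) (hε1 : ε ≤ 1)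
    (hf : ∀ i ∈ s, |f i| ≤ δ) : -(#s * δ) ≤ commutatorSum ε f s I := by
  have hin := abs_sum_le_sum_abs f (s ∩ I)
  have hout := abs_sum_le_sum_abs f (s \ I)
  have habs : ∑ i ∈ s, |f i| ≤ #s * δ := by
    simpa using sum_le_card_nsmul s (|f ·|) δ hf
  rw [← sum_inter_add_sum_sdiff s I] at habs
  have hin' : -|∑ i ∈ s ∩ I, f i| ≤ ε * ∑ i ∈ s ∩ I, f i := by
    nlinarith [neg_abs_le (∑ i ∈ s ∩ I, f i), abs_nonneg (∑ i ∈ s ∩ I, f i)]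
  have hout' : -|∑ i ∈ s \ I, f i| ≤ (ε - 1) * ∑ i ∈ s \ I, f i := by
    nlinarith [le_abs_self (∑ i ∈ s \ I, f i), abs_nonneg (∑ i ∈ s \ I, f i)]
  rw [commutatorSum_eq]
  linarith

end commutatorSum

theorem mul_mul_two_mul_le_one_div {ε b N C : ℝ} (hC : 0 < C) (hε0 : 0 ≤ ε) (hbN : b ≤ N)
    (hε : ε < 1 / (2 * N * C ^ 2)) : ε * (b * (2 * C)) ≤ 1 / C := by
  have hεN := (lt_div_iff₀ (one_div_pos.mp (hε0.trans_lt hε))).mp hε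
  rw [le_div_iff₀ hC]
  nlinarith [mul_le_mul_of_nonneg_left hbN (mul_nonneg hε0 (sq_nonneg C))]

theorem stmt4_general (n q : ℕ) (hq1 : 1 ≤ q) (hq2 : q ≤ n - 1)
    (C : ℝ) (hC : 0 < C) (lam : ℕ → ℝ)
    (hmono : ∀ i k, 1 ≤ i → i ≤ k → k ≤ n - 1 → lam i ≤ lam k)
    (habs1 : |lam 1| < 2 * C)
    (habsC : |lam (n - q)| > C)
    (hneg : lam (n - q) < 0)
    (hsmall : ∀ i, n - q + 1 ≤ i → i ≤ n - 1 → |lam i| < 1 / C)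
    (ε : ℝ) (hε0 : 0 < ε) (hε1 : ε < min 1 (1 / (2 * ((n : ℝ) - 1) * C ^ 2)))
    (j : ℕ) (hj : j ≤ n - q - 1)
    (I : Finset ℕ) (hI : I ⊆ Finset.Icc 1 (n - 1)) (hcard : I.card = j) :
    (∑ i ∈ I, lam i) + (ε - 1) * ∑ k ∈ Finset.Icc 1 (n - 1), lam k
      ≥ C - ((n : ℝ) - 1) / C := by
  obtain ⟨hε_lt_one, hε_small⟩ := lt_min_iff.mp hε1
  set B := Icc 1 (n - q)
  set T := Icc (n - q + 1) (n - 1)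
  have hBT : Icc 1 (n - 1) = B ∪ T := by ext; simp only [B, T, mem_union, mem_Icc]; omega
  have hdisj : Disjoint B T := disjoint_left.mpr fun i hB hT ↦ by
    simp only [B, T, mem_Icc] at hB hT; omega
  have hcardB : #B = n - q := by simp [B]
  have hcardT : #T = q - 1 := by simp only [T, Nat.card_Icc]; omega
  have hn : (n : ℝ) - 1 = #B + #T := by
    rw [sub_eq_iff_eq_add]; exact_mod_cast (by omega : n = #B + #T + 1)
  have hbig : ∀ i ∈ B, lam i ≤ -C := fun i hi ↦ by
    rw [abs_of_neg hneg] at habsC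
    exact (hmono i _ (mem_Icc.mp hi).1 (mem_Icc.mp hi).2 (by omega)).trans (by linarith)
  have hbounded : ∀ i ∈ B, -(2 * C) ≤ lam i := fun i hi ↦ by
    rw [mem_Icc] at hi
    exact (abs_lt.mp habs1).1.le.trans (hmono 1 i le_rfl hi.1 (by omega))
  have hsmallT : ∀ i ∈ T, |lam i| ≤ 1 / C := fun i hi ↦
    (hsmall i (mem_Icc.mp hi).1 (mem_Icc.mp hi).2).le
  have hBpart := sub_le_commutatorSum (I := I) hε0.le hC.le (by omega) hbig hbounded
  have hTpart := neg_card_mul_le_commutatorSum (I := I) hε0.le hε_lt_one.le hsmallT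
  have hεB : ε * (#B * (2 * C)) ≤ 1 / C :=
    mul_mul_two_mul_le_one_div hC hε0.le (by linarith [(#T).cast_nonneg (α := ℝ)]) hε_small
  have hB1 : 1 / C ≤ #B / C := by gcongr; exact_mod_cast (by omega : 1 ≤ #B)
  have hlhs : ∑ i ∈ I, lam i + (ε - 1) * ∑ k ∈ Icc 1 (n - 1), lam k
      = commutatorSum ε lam B I + commutatorSum ε lam T I := by
    rw [← commutatorSum_union hdisj, ← hBT, commutatorSum, inter_eq_right.mpr hI]
  rw [ge_iff_le, hlhs, hn, add_div, ← mul_one_div (#T : ℝ)]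
  linarith

theorem stmt4 (n q : ℕ) (hn : 2 ≤ n) (hq1 : 1 ≤ q) (hq2 : q ≤ n - 1)
    (C : ℝ) (hC : 0 < C) (lam : ℕ → ℝ)
    (hmono : ∀ i k, 1 ≤ i → i ≤ k → k ≤ n - 1 → lam i ≤ lam k)
    (habs1 : |lam 1| < 2 * C)
    (habsmono : ∀ i, 1 ≤ i → i + 1 ≤ n - q → |lam (i + 1)| ≤ |lam i|)
    (habsC : |lam (n - q)| > C)
    (hneg : lam (n - q) < 0)
    (hsmall : ∀ i, n - q + 1 ≤ i → i ≤ n - 1 → |lam i| < 1 / C)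
    (ε : ℝ) (hε0 : 0 < ε) (hε1 : ε < min 1 (1 / (2 * ((n : ℝ) - 1) * C ^ 2)))
    (j : ℕ) (hj : j ≤ n - q - 1)
    (I : Finset ℕ) (hI : I ⊆ Finset.Icc 1 (n - 1)) (hcard : I.card = j) :
    (∑ i ∈ I, lam i) + (ε - 1) * ∑ k ∈ Finset.Icc 1 (n - 1), lam k
      ≥ C - ((n : ℝ) - 1) / C :=
  stmt4_general n q hq1 hq2 C hC lam hmono habs1 habsC hneg hsmall ε hε0 hε1 j hj I hI hcard
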